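/- Let G be a finite simple graph containing no theta, pyramid, prism, or turtle as an induced subgraph, let H be a hole in G, and let u and v be two major vertices for H with uv ∈ E(G). Then either u and v cross with respect to H, or u and v have a common neighbor in H. -/

import Mathlib

namespace Paper

open SimpleGraph

variable {V : Type*}

/-- The set of neighbors of `v` inside the set `H`. -/
def nbrsIn (G : SimpleGraph V) (v : V) (H : Set V) : Set V :=
  {u | u ∈ H ∧ G.Adj v u}

/-- The vertex set of a walk. -/
def supp {G : SimpleGraph V} {a b : V} (P : G.Walk a b) : Set V :=
  {v | v ∈ P.support}

/-- `H` is a hole of `G`: an induced cycle of length at least 4.  (A finite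
graph is a cycle iff it is connected and `2`-regular.) -/
def IsHole (G : SimpleGraph V) (H : Set V) : Prop :=
  H.Finite ∧ 4 ≤ H.ncard ∧ (G.induce H).Connected ∧
    ∀ v ∈ H, (nbrsIn G v H).ncard = 2

/-- `G` contains a theta as an induced subgraph. -/
def HasTheta (G : SimpleGraph V) : Prop :=
  ∃ (a b : V) (P₁ P₂ P₃ : G.Walk a b),
    a ≠ b ∧ ¬ G.Adj a b ∧
    P₁.IsPath ∧ P₂.IsPath ∧ P₃.IsPath ∧
    2 ≤ P₁.length ∧ 2 ≤ P₂.length ∧ 2 ≤ P₃.length ∧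
    (∀ v, v ∈ P₁.support → v ∈ P₂.support → v = a ∨ v = b) ∧
    (∀ v, v ∈ P₁.support → v ∈ P₃.support → v = a ∨ v = b) ∧
    (∀ v, v ∈ P₂.support → v ∈ P₃.support → v = a ∨ v = b) ∧
    IsHole G (supp P₁ ∪ supp P₂) ∧
    IsHole G (supp P₁ ∪ supp P₃) ∧
    IsHole G (supp P₂ ∪ supp P₃)

/-- `G` contains a pyramid as an induced subgraph. -/
def HasPyramid (G : SimpleGraph V) : Prop :=
  ∃ (a b₁ b₂ b₃ : V) (P₁ : G.Walk a b₁) (P₂ : G.Walk a b₂) (P₃ : G.Walk a b₃),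
    G.Adj b₁ b₂ ∧ G.Adj b₂ b₃ ∧ G.Adj b₁ b₃ ∧
    P₁.IsPath ∧ P₂.IsPath ∧ P₃.IsPath ∧
    (∀ v, v ∈ P₁.support → v ∈ P₂.support → v = a) ∧
    (∀ v, v ∈ P₁.support → v ∈ P₃.support → v = a) ∧
    (∀ v, v ∈ P₂.support → v ∈ P₃.support → v = a) ∧
    ¬ (P₁.length = 1 ∧ P₂.length = 1) ∧
    ¬ (P₁.length = 1 ∧ P₃.length = 1) ∧
    ¬ (P₂.length = 1 ∧ P₃.length = 1) ∧
    IsHole G (supp P₁ ∪ supp P₂) ∧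
    IsHole G (supp P₁ ∪ supp P₃) ∧
    IsHole G (supp P₂ ∪ supp P₃)

/-- `G` contains a prism as an induced subgraph. -/
def HasPrism (G : SimpleGraph V) : Prop :=
  ∃ (a₁ a₂ a₃ b₁ b₂ b₃ : V) (P₁ : G.Walk a₁ b₁) (P₂ : G.Walk a₂ b₂)
      (P₃ : G.Walk a₃ b₃),
    G.Adj a₁ a₂ ∧ G.Adj a₂ a₃ ∧ G.Adj a₁ a₃ ∧
    G.Adj b₁ b₂ ∧ G.Adj b₂ b₃ ∧ G.Adj b₁ b₃ ∧
    P₁.IsPath ∧ P₂.IsPath ∧ P₃.IsPath ∧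
    (∀ v, v ∈ P₁.support → v ∉ P₂.support) ∧
    (∀ v, v ∈ P₁.support → v ∉ P₃.support) ∧
    (∀ v, v ∈ P₂.support → v ∉ P₃.support) ∧
    IsHole G (supp P₁ ∪ supp P₂) ∧
    IsHole G (supp P₁ ∪ supp P₃) ∧
    IsHole G (supp P₂ ∪ supp P₃)

/-- `G` contains a turtle as an induced subgraph. -/
def HasTurtle (G : SimpleGraph V) : Prop :=
  ∃ (a₁ b₁ a₂ b₂ x y : V) (P₁ : G.Walk a₁ b₁) (P₂ : G.Walk a₂ b₂),
    P₁.IsPath ∧ P₂.IsPath ∧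
    (∀ v, v ∈ P₁.support → v ∉ P₂.support) ∧
    G.Adj a₁ a₂ ∧ G.Adj b₁ b₂ ∧ G.Adj x y ∧
    x ∉ P₁.support ∧ x ∉ P₂.support ∧ y ∉ P₁.support ∧ y ∉ P₂.support ∧
    IsHole G (supp P₁ ∪ supp P₂) ∧
    3 ≤ (nbrsIn G x (supp P₁)).ncard ∧
    (∀ v ∈ P₂.support, ¬ G.Adj x v) ∧
    3 ≤ (nbrsIn G y (supp P₂)).ncard ∧
    (∀ v ∈ P₁.support, ¬ G.Adj y v)

/-- `G` contains no theta, pyramid, prism, or turtle as an induced subgraph. -/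
def TPPTFree (G : SimpleGraph V) : Prop :=
  ¬ HasTheta G ∧ ¬ HasPyramid G ∧ ¬ HasPrism G ∧ ¬ HasTurtle G

/-- The neighborhood of a set `X`: all vertices outside `X` with a neighbor in `X`. -/
def setNbrs (G : SimpleGraph V) (X : Set V) : Set V :=
  {v | v ∉ X ∧ ∃ x ∈ X, G.Adj x v}

/-- `A` is a connected component of `G ∖ C`. -/
def IsCompOf (G : SimpleGraph V) (C A : Set V) : Prop :=
  A.Nonempty ∧ Disjoint A C ∧ (G.induce A).Connected ∧
    ∀ a ∈ A, ∀ b : V, G.Adj a b → b ∉ C → b ∈ A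

/-- `C` is a minimal separator of `G`: there are two distinct components `L`, `R`
of `G ∖ C` with `N(L) = N(R) = C`. -/
def IsMinSep (G : SimpleGraph V) (C : Set V) : Prop :=
  ∃ L R : Set V, IsCompOf G C L ∧ IsCompOf G C R ∧ L ≠ R ∧
    setNbrs G L = C ∧ setNbrs G R = C

/-- A proper separator: a minimal separator that is not a clique. -/
def IsProperSep (G : SimpleGraph V) (C : Set V) : Prop :=
  IsMinSep G C ∧ ¬ (∀ a ∈ C, ∀ b ∈ C, a ≠ b → G.Adj a b)

/-- `u` is a minor vertex for the hole `H`: `u ∉ H`, `u` has a neighbor in `H` and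
all its neighbors in `H` lie in a path of `H` with at most three vertices. -/
def IsMinorFor (G : SimpleGraph V) (u : V) (H : Set V) : Prop :=
  u ∉ H ∧ (nbrsIn G u H).Nonempty ∧
    ∃ a b c : V, a ∈ H ∧ b ∈ H ∧ c ∈ H ∧ G.Adj a b ∧ G.Adj b c ∧ a ≠ c ∧
      nbrsIn G u H ⊆ {a, b, c}

/-- `u` is a major vertex for the hole `H`. -/
def IsMajorFor (G : SimpleGraph V) (u : V) (H : Set V) : Prop :=
  u ∉ H ∧ (nbrsIn G u H).Nonempty ∧ ¬ IsMinorFor G u H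

/-- `u` is a pendant of `H`: it has a unique neighbor in `H`. -/
def IsPendant (G : SimpleGraph V) (u : V) (H : Set V) : Prop :=
  u ∉ H ∧ ∃ a : V, nbrsIn G u H = {a}

/-- `u` is a cap of `H`: it has exactly two neighbors in `H` and they are adjacent. -/
def IsCap (G : SimpleGraph V) (u : V) (H : Set V) : Prop :=
  u ∉ H ∧ ∃ a b : V, a ≠ b ∧ G.Adj a b ∧ nbrsIn G u H = {a, b}

/-- `u` is a clone of `y` in `H`: its neighbors in `H` are exactly the three
vertices of a path `x-y-z` of `H`. -/
def IsCloneOf (G : SimpleGraph V) (u y : V) (H : Set V) : Prop :=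
  u ∉ H ∧ ∃ x z : V, x ∈ H ∧ y ∈ H ∧ z ∈ H ∧ G.Adj x y ∧ G.Adj y z ∧ x ≠ z ∧
    nbrsIn G u H = {x, y, z}

/-- `u` is a clone (of some vertex) in `H`. -/
def IsClone (G : SimpleGraph V) (u : V) (H : Set V) : Prop :=
  ∃ y, IsCloneOf G u y H

/-- `P` is a `u`-sector of the hole `H`: a path contained in `H` whose ends are
neighbors of `u` and whose interior is anticomplete to `u`. -/
def IsSector (G : SimpleGraph V) (u : V) (H : Set V) {a b : V} (P : G.Walk a b) : Prop :=
  P.IsPath ∧ (∀ v ∈ P.support, v ∈ H) ∧ G.Adj u a ∧ G.Adj u b ∧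
    ∀ v ∈ P.support, v ≠ a → v ≠ b → ¬ G.Adj u v

/-- `u` and `v` are nested with respect to the hole `H`: there are distinct
`a, b ∈ H` such that one `ab`-path of `H` contains all neighbors of `u` in `H`
and the other `ab`-path of `H` contains all neighbors of `v` in `H`. -/
def Nested (G : SimpleGraph V) (u v : V) (H : Set V) : Prop :=
  ∃ a b : V, a ∈ H ∧ b ∈ H ∧ a ≠ b ∧
    ∃ (P Q : G.Walk a b), P.IsPath ∧ Q.IsPath ∧
      supp P ∪ supp Q = H ∧
      (∀ x, x ∈ P.support → x ∈ Q.support → x = a ∨ x = b) ∧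
      (∀ x ∈ H, G.Adj u x → x ∈ P.support) ∧
      (∀ x ∈ H, G.Adj v x → x ∈ Q.support)

/-- `u` is a hub for the hole `H`: its neighbors in `H` are exactly four vertices
`p, q, r, s` appearing in that order along `H`, with `pq, rs ∈ E(G)` and
`ps, qr ∉ E(G)`. -/
def IsHub (G : SimpleGraph V) (u : V) (H : Set V) : Prop :=
  u ∉ H ∧ ∃ (p q r s : V) (A : G.Walk q r) (B : G.Walk s p),
    p ≠ q ∧ p ≠ r ∧ p ≠ s ∧ q ≠ r ∧ q ≠ s ∧ r ≠ s ∧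
    nbrsIn G u H = {p, q, r, s} ∧
    G.Adj p q ∧ G.Adj r s ∧ ¬ G.Adj p s ∧ ¬ G.Adj q r ∧
    A.IsPath ∧ B.IsPath ∧
    (∀ v, v ∈ A.support → v ∉ B.support) ∧
    supp A ∪ supp B = H

/-- `N` is an extended neighborhood of `w` in the hole `H`. -/
def IsExtNbhd (G : SimpleGraph V) (w : V) (H N : Set V) : Prop :=
  ∃ (x y x' y' : V) (Q : G.Walk x y),
    IsSector G w H Q ∧
    x' ∈ H ∧ x' ∉ Q.support ∧ G.Adj x' x ∧
    y' ∈ H ∧ y' ∉ Q.support ∧ G.Adj y' y ∧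
    N = supp Q ∪ ({x', y'} ∩ nbrsIn G w H)

/-- `a` and `b` are distant in `H` with respect to `w`: no extended neighborhood
of `w` in `H` contains both `a` and `b`. -/
def Distant (G : SimpleGraph V) (w : V) (H : Set V) (a b : V) : Prop :=
  a ∈ H ∧ b ∈ H ∧ ∀ N : Set V, IsExtNbhd G w H N → ¬ (a ∈ N ∧ b ∈ N)

/-- `P` is an `(H, w)`-significant path. -/
def IsSignificant (G : SimpleGraph V) (w : V) (H : Set V) {p q : V}
    (P : G.Walk p q) : Prop :=
  P.IsPath ∧ ∃ a b : V, a ∈ H ∧ G.Adj p a ∧ ¬ G.Adj w a ∧ b ∈ H ∧ G.Adj q b ∧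
    Distant G w H a b

/-- `v` is a gem-center for the hole `H`. -/
def IsGemCenter (G : SimpleGraph V) (v : V) (H : Set V) : Prop :=
  5 ≤ H.ncard ∧ ∃ h₁ h₂ h₃ h₄ : V, h₁ ∈ H ∧ h₂ ∈ H ∧ h₃ ∈ H ∧ h₄ ∈ H ∧
    G.Adj h₁ h₂ ∧ G.Adj h₂ h₃ ∧ G.Adj h₃ h₄ ∧ h₁ ≠ h₃ ∧ h₁ ≠ h₄ ∧ h₂ ≠ h₄ ∧
    nbrsIn G v H = {h₁, h₂, h₃, h₄}

/-- `x` is the center of a star cutset of `G`. -/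
def IsStarCutsetCenter (G : SimpleGraph V) (x : V) : Prop :=
  ∃ X : Set V, x ∈ X ∧ (∀ y ∈ X, y ≠ x → G.Adj x y) ∧
    ¬ (G.induce (Xᶜ)).Preconnected

/-- `v` is `(c₁, c₂)`-heavy with respect to the hole `H`. -/
def IsHeavy (G : SimpleGraph V) (c₁ c₂ : V) (H : Set V) (v : V) : Prop :=
  IsMajorFor G v H ∧ Distant G v H c₁ c₂

/-- The pair of paths `HL`, `HR` forms a `(C, c₁, c₂)`-hole with frame
`(c₁, c₂, ℓ₁', ℓ₁, r₁, r₁', ℓ₂', ℓ₂, r₂, r₂')`, where `L` and `R` are the two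
full components of the proper separator `C`. -/
def IsCHoleWithFrame (G : SimpleGraph V) (C L R : Set V)
    (c₁ c₂ ℓ₁ ℓ₁' ℓ₂ ℓ₂' r₁ r₁' r₂ r₂' : V) (HL HR : G.Walk c₁ c₂) : Prop :=
  HL.IsPath ∧ HR.IsPath ∧
  (∀ v, v ∈ HL.support → v ∈ HR.support → v = c₁ ∨ v = c₂) ∧
  IsHole G (supp HL ∪ supp HR) ∧
  c₁ ∈ C ∧ c₂ ∈ C ∧
  (∀ v, v ∈ HL.support → v ≠ c₁ → v ≠ c₂ → v ∈ L) ∧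
  (∀ v, v ∈ HR.support → v ≠ c₁ → v ≠ c₂ → v ∈ R) ∧
  (supp HL ∪ supp HR) ∩ C = {c₁, c₂} ∧
  ℓ₁ ∈ HL.support ∧ ℓ₁ ≠ c₂ ∧ G.Adj c₁ ℓ₁ ∧
  ℓ₂ ∈ HL.support ∧ ℓ₂ ≠ c₁ ∧ G.Adj c₂ ℓ₂ ∧
  r₁ ∈ HR.support ∧ r₁ ≠ c₂ ∧ G.Adj c₁ r₁ ∧
  r₂ ∈ HR.support ∧ r₂ ≠ c₁ ∧ G.Adj c₂ r₂ ∧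
  ((ℓ₁ = ℓ₂ ∧ ℓ₁' = ℓ₁) ∨
    (ℓ₁ ≠ ℓ₂ ∧ ℓ₁' ∈ HL.support ∧ ℓ₁' ≠ c₁ ∧ ℓ₁' ≠ c₂ ∧ G.Adj ℓ₁ ℓ₁')) ∧
  ((ℓ₁ = ℓ₂ ∧ ℓ₂' = ℓ₂) ∨
    (ℓ₁ ≠ ℓ₂ ∧ ℓ₂' ∈ HL.support ∧ ℓ₂' ≠ c₁ ∧ ℓ₂' ≠ c₂ ∧ G.Adj ℓ₂ ℓ₂')) ∧
  ((r₁ = r₂ ∧ r₁' = r₁) ∨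
    (r₁ ≠ r₂ ∧ r₁' ∈ HR.support ∧ r₁' ≠ c₁ ∧ r₁' ≠ c₂ ∧ G.Adj r₁ r₁')) ∧
  ((r₁ = r₂ ∧ r₂' = r₂) ∨
    (r₁ ≠ r₂ ∧ r₂' ∈ HR.support ∧ r₂' ≠ c₁ ∧ r₂' ≠ c₂ ∧ G.Adj r₂ r₂'))

/-- The 3-dimensional hypercube graph: vertices are elements of `{0,1}³`, two
vertices being adjacent exactly when they differ in one coordinate. -/
def cubeGraph : SimpleGraph (Fin 3 → Bool) where
  Adj x y := ∃! i, x i ≠ y i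
  symm := by
    constructor
    rintro x y ⟨i, hi, hj⟩
    exact ⟨i, Ne.symm hi, fun j h => hj j (Ne.symm h)⟩
  loopless := by
    constructor
    rintro x ⟨i, hi, -⟩
    exact hi rfl

/-! Suppose `u` and `v` are nested, witnessed by the two `ab`-paths `P ⊇ N_H(u)` and
`Q ⊇ N_H(v)` of `H`, and have no common neighbour in `H`. Each of `u`, `v` has at least three
neighbours in `H`: if the only neighbours of `u` in `H` are two nonadjacent vertices `x`, `y`,
then `x-u-y` and the two `xy`-paths of `H` form a theta, and in every other case with at most
two neighbours `u` is minor. Now keep each of `a`, `b` in `P` if `u` sees it and in `Q`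
otherwise. The trimmed paths partition `H`, are joined at both ends by edges of `H`, and with
the edge `uv` form a turtle. -/

section Holes

variable {G : SimpleGraph V}

@[simp] lemma mem_supp {a b x : V} {P : G.Walk a b} : x ∈ supp P ↔ x ∈ P.support := Iff.rfl

lemma supp_reverse {a b : V} (P : G.Walk a b) : supp P.reverse = supp P := by
  ext; simp

lemma supp_append {a b c : V} (P : G.Walk a b) (Q : G.Walk b c) :
    supp (P.append Q) = supp P ∪ supp Q := by
  ext; simp [Walk.mem_support_append_iff]

lemma supp_union_cons_cons {x y u : V} (R : G.Walk x y) (hxu : G.Adj x u) (huy : G.Adj u y) :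
    supp R ∪ supp (.cons hxu (.cons huy .nil) : G.Walk x y) = insert u (supp R) := by
  ext z
  simp only [Set.mem_union, mem_supp, Walk.support_cons, Walk.support_nil, List.mem_cons,
    List.not_mem_nil, or_false, Set.mem_insert_iff]
  constructor
  · rintro (h | rfl | rfl | rfl)
    exacts [Or.inr h, Or.inr R.start_mem_support, Or.inl rfl, Or.inr R.end_mem_support]
  · rintro (rfl | h)
    exacts [Or.inr (Or.inr (Or.inl rfl)), Or.inl h]

lemma isPath_cons_cons {x y u : V} (hne : x ≠ y) (hxu : G.Adj x u) (huy : G.Adj u y) :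
    (.cons hxu (.cons huy .nil) : G.Walk x y).IsPath := by
  simp [hne, hxu.ne, huy.ne]

lemma ncard_supp_le {a b : V} (P : G.Walk a b) : (supp P).ncard ≤ P.length + 1 := by
  classical
  have : supp P = ↑P.support.toFinset := by ext; simp
  rw [this, Set.ncard_coe_finset, ← Walk.length_support]
  exact List.toFinset_card_le _

lemma two_le_length_of_not_adj {x y : V} (P : G.Walk x y) (hne : x ≠ y) (hxy : ¬ G.Adj x y) :
    2 ≤ P.length := by
  have h₀ : P.length ≠ 0 := fun h => hne (Walk.eq_of_length_eq_zero h)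
  have h₁ : P.length ≠ 1 := fun h => hxy (Walk.adj_of_length_eq_one h)
  omega

lemma start_notMem_tail_support {a b : V} {P : G.Walk a b} (hP : P.IsPath) :
    a ∉ P.support.tail := by
  have := hP.support_nodup
  rw [← P.cons_tail_support] at this
  exact (List.nodup_cons.mp this).1

lemma exists_path_drop_start {a b : V} {P : G.Walk a b} (hP : P.IsPath) (p : Prop)
    (hp : p → ¬ P.Nil) :
    ∃ (a' : V) (P' : G.Walk a' b), P'.IsPath ∧ (p → G.Adj a a') ∧ (¬ p → a' = a) ∧
      P.length ≤ P'.length + 1 ∧ ∀ x, x ∈ P'.support ↔ x ∈ P.support ∧ (p → x ≠ a) := by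
  by_cases h : p
  · refine ⟨P.snd, P.tail, hP.tail, fun _ => P.adj_snd (hp h), fun h' => (h' h).elim,
      (Walk.length_tail_add_one (hp h)).ge, fun x => ?_⟩
    rw [Walk.support_tail_of_not_nil _ (hp h), ← P.cons_tail_support, List.mem_cons]
    constructor
    · exact fun hx => ⟨Or.inr hx, fun _ hxa => start_notMem_tail_support hP (hxa ▸ hx)⟩
    · rintro ⟨rfl | hx, hxa⟩
      exacts [(hxa h rfl).elim, hx]
  · exact ⟨a, P, hP, fun h' => (h h').elim, fun _ => rfl, by omega, fun x => by simp [h]⟩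

lemma exists_path_drop_ends {a b : V} {P : G.Walk a b} (hP : P.IsPath) (hlen : 2 ≤ P.length)
    (p q : Prop) :
    ∃ (a' b' : V) (P' : G.Walk a' b'), P'.IsPath ∧ (p → G.Adj a a') ∧ (¬ p → a' = a) ∧
      (q → G.Adj b b') ∧ (¬ q → b' = b) ∧
      ∀ x, x ∈ P'.support ↔ x ∈ P.support ∧ (p → x ≠ a) ∧ (q → x ≠ b) := by
  obtain ⟨a', P₁, hP₁, ha, ha', hlen₁, hmem₁⟩ :=
    exists_path_drop_start hP p fun _ => Walk.not_nil_iff_lt_length.mpr (by omega)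
  obtain ⟨b', P₂, hP₂, hb, hb', -, hmem₂⟩ := exists_path_drop_start hP₁.reverse q
    fun _ => Walk.not_nil_iff_lt_length.mpr (by rw [Walk.length_reverse]; omega)
  refine ⟨a', b', P₂.reverse, hP₂.reverse, ha, ha', hb, hb', fun x => ?_⟩
  simp only [Walk.support_reverse, List.mem_reverse, hmem₂, hmem₁]
  tauto

lemma isCycle_append_reverse {a b : V} {P Q : G.Walk a b} (hP : P.IsPath) (hQ : Q.IsPath)
    (hPQ : ∀ x, x ∈ P.support → x ∈ Q.support → x = a ∨ x = b)
    (hlen : 3 ≤ P.length + Q.length) : (P.append Q.reverse).IsCycle := by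
  have hnil : ¬ (P.append Q.reverse).Nil := by
    rw [Walk.not_nil_iff_lt_length, Walk.length_append, Walk.length_reverse]; omega
  refine Walk.isCycle_iff_isPath_tail_and_le_length.mpr
    ⟨.mk' ?_, by rw [Walk.length_append, Walk.length_reverse]; omega⟩
  rw [Walk.support_tail_of_not_nil _ hnil, Walk.tail_support_append]
  refine List.nodup_append'.mpr ⟨hP.support_nodup.sublist (List.tail_sublist _),
    hQ.reverse.support_nodup.sublist (List.tail_sublist _), fun x hxP hxQ => ?_⟩
  have hxQ' : x ∈ Q.support := by simpa using List.mem_of_mem_tail hxQ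
  rcases hPQ x (List.mem_of_mem_tail hxP) hxQ' with rfl | rfl
  · exact start_notMem_tail_support hP hxP
  · exact start_notMem_tail_support hQ.reverse hxQ

lemma ncard_supp_of_isCycle {c : V} {C : G.Walk c c} (hC : C.IsCycle) :
    (supp C).ncard = C.length := by
  classical
  have : supp C = ↑C.support.tail.toFinset := by
    ext x
    rw [mem_supp, ← C.cons_tail_support, List.mem_cons, Finset.mem_coe, List.mem_toFinset]
    exact or_iff_right_of_imp fun h => h ▸ C.end_mem_tail_support hC.not_nil
  rw [this, Set.ncard_coe_finset, List.toFinset_card_of_nodup hC.support_nodup,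
    List.length_tail, Walk.length_support, Nat.add_sub_cancel]

lemma exists_two_mem_nbrsIn_of_isCycle {c : V} {C : G.Walk c c} (hC : C.IsCycle) {x : V}
    (hx : x ∈ C.support) :
    ∃ y z, y ≠ z ∧ y ∈ nbrsIn G x (supp C) ∧ z ∈ nbrsIn G x (supp C) := by
  classical
  set C' := C.rotate x hx
  have hC' : C'.IsCycle := hC.rotate hx
  refine ⟨C'.snd, C'.penultimate, hC'.snd_ne_penultimate, ⟨?_, C'.adj_snd hC'.not_nil⟩,
    ⟨?_, (C'.adj_penultimate hC'.not_nil).symm⟩⟩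
  · exact (C.mem_support_rotate_iff x hx).mp (C'.getVert_mem_support 1)
  · exact (C.mem_support_rotate_iff x hx).mp (C'.getVert_mem_support _)

lemma isHole_supp_of_isCycle {c : V} {C : G.Walk c c} (hC : C.IsCycle) (h4 : 4 ≤ C.length)
    (hdeg : ∀ x ∈ C.support, (nbrsIn G x (supp C)).ncard ≤ 2) : IsHole G (supp C) := by
  have hfin : (supp C).Finite := C.support.finite_toSet
  refine ⟨hfin, ncard_supp_of_isCycle hC ▸ h4, C.connected_induce_support, fun x hx => ?_⟩
  obtain ⟨y, z, hyz, hy, hz⟩ := exists_two_mem_nbrsIn_of_isCycle hC hx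
  refine (hdeg x hx).antisymm ?_
  calc 2 = ({y, z} : Set V).ncard := (Set.ncard_pair hyz).symm
    _ ≤ _ := Set.ncard_le_ncard (Set.insert_subset hy (Set.singleton_subset_iff.mpr hz))
        (hfin.subset fun _ h => h.1)

lemma mem_nbrsIn_of_eq_pair {H : Set V} {u x y : V} (hN : nbrsIn G u H = {x, y}) :
    x ∈ nbrsIn G u H ∧ y ∈ nbrsIn G u H :=
  ⟨hN ▸ Set.mem_insert x {y}, hN ▸ Set.mem_insert_of_mem x rfl⟩

namespace IsHole

variable {H : Set V}

lemma finite_nbrsIn (hH : IsHole G H) (x : V) : (nbrsIn G x H).Finite :=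
  hH.1.subset fun _ h => h.1

lemma ncard_le_two_of_subset_nbrsIn (hH : IsHole G H) {x : V} (hx : x ∈ H) {S : Set V}
    (hS : S ⊆ nbrsIn G x H) : S.ncard ≤ 2 :=
  (Set.ncard_le_ncard hS (hH.finite_nbrsIn x)).trans (hH.2.2.2 x hx).le

lemma isMinorFor_of_subset_pair (hH : IsHole G H) {u x y : V} (hu : u ∉ H)
    (hne : (nbrsIn G u H).Nonempty) (hx : x ∈ H) (hy : y ∈ nbrsIn G x H)
    (hsub : nbrsIn G u H ⊆ {x, y}) : IsMinorFor G u H := by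
  obtain ⟨r, hr, hry⟩ :=
    Set.exists_ne_of_one_lt_ncard (by rw [hH.2.2.2 x hx]; norm_num) y
  exact ⟨hu, hne, r, x, y, hr.1, hx, hy.1, hr.2.symm, hy.2, hry,
    hsub.trans (Set.subset_insert _ _)⟩

end IsHole

def Splits (H : Set V) {a b : V} (P Q : G.Walk a b) : Prop :=
  P.IsPath ∧ Q.IsPath ∧ supp P ∪ supp Q = H ∧
    ∀ x, x ∈ P.support → x ∈ Q.support → x = a ∨ x = b

lemma exists_splits_of_isCycle {c : V} {C : G.Walk c c} (hC : C.IsCycle) {x y : V}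
    (hx : x ∈ C.support) (hy : y ∈ C.support) (hxy : x ≠ y) :
    ∃ R₁ R₂ : G.Walk x y, Splits (supp C) R₁ R₂ := by
  classical
  set C' := C.rotate x hx
  have hC' : C'.IsCycle := hC.rotate hx
  have hy' : y ∈ C'.support := (C.mem_support_rotate_iff x hx).mpr hy
  set R₁ := C'.takeUntil y hy'
  set R₂ := C'.dropUntil y hy'
  have hspec : R₁.append R₂ = C' := C'.take_spec hy'
  have hR₂ : R₂.IsPath := (hspec ▸ hC').isPath_of_append_right (Walk.not_nil_of_ne hxy)
  refine ⟨R₁, R₂.reverse, hC'.isPath_takeUntil hy', hR₂.reverse, ?_, fun z hz₁ hz₂ => ?_⟩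
  · ext z
    rw [supp_reverse, ← supp_append, hspec, mem_supp, mem_supp, Walk.mem_support_rotate_iff]
  · have hdisj := List.nodup_append'.mp
      (Walk.tail_support_append R₁ R₂ ▸ hspec ▸ hC'.support_nodup)
    rw [← R₁.cons_tail_support, List.mem_cons] at hz₁
    rw [Walk.support_reverse, List.mem_reverse, ← R₂.cons_tail_support, List.mem_cons] at hz₂
    rcases hz₁ with rfl | hz₁
    · exact Or.inl rfl
    rcases hz₂ with rfl | hz₂
    · exact Or.inr rfl
    exact (hdisj.2.2 hz₁ hz₂).elim

namespace Splits

variable {H : Set V} {a b : V} {P Q : G.Walk a b}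

lemma symm (hs : Splits H P Q) : Splits H Q P :=
  ⟨hs.2.1, hs.1, Set.union_comm _ _ ▸ hs.2.2.1, fun x hQ hP => hs.2.2.2 x hP hQ⟩

lemma reverse (hs : Splits H P Q) : Splits H P.reverse Q.reverse := by
  refine ⟨hs.1.reverse, hs.2.1.reverse, by rw [supp_reverse, supp_reverse, hs.2.2.1], ?_⟩
  intro x hP hQ
  simp only [Walk.support_reverse, List.mem_reverse] at hP hQ
  exact (hs.2.2.2 x hP hQ).symm

lemma supp_subset_left (hs : Splits H P Q) : supp P ⊆ H :=
  hs.2.2.1 ▸ Set.subset_union_left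

lemma supp_subset_right (hs : Splits H P Q) : supp Q ⊆ H :=
  hs.2.2.1 ▸ Set.subset_union_right

lemma supp_append_reverse (hs : Splits H P Q) : supp (P.append Q.reverse) = H := by
  rw [supp_append, supp_reverse, hs.2.2.1]

lemma isCycle (hs : Splits H P Q) (h4 : 4 ≤ H.ncard) : (P.append Q.reverse).IsCycle := by
  refine isCycle_append_reverse hs.1 hs.2.1 hs.2.2.2 ?_
  have := hs.supp_append_reverse ▸ ncard_supp_le (P.append Q.reverse)
  rw [Walk.length_append, Walk.length_reverse] at this
  omega

lemma exists_splits (hs : Splits H P Q) (h4 : 4 ≤ H.ncard) {x y : V} (hx : x ∈ H) (hy : y ∈ H)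
    (hxy : x ≠ y) : ∃ R₁ R₂ : G.Walk x y, Splits H R₁ R₂ := by
  rw [← hs.supp_append_reverse] at hx hy ⊢
  exact exists_splits_of_isCycle (hs.isCycle h4) hx hy hxy

/-- The start `a` of `P` trades its neighbour on `Q` for `u`. -/
lemma ncard_nbrsIn_insert_start_le (hH : IsHole G H) (hs : Splits H P Q) (hne : a ≠ b)
    (hab : ¬ G.Adj a b) (u : V) : (nbrsIn G a (insert u (supp P))).ncard ≤ 2 := by
  have haw : G.Adj a Q.snd := Q.adj_snd (Walk.not_nil_of_ne hne)
  have hwQ : Q.snd ∈ Q.support := Q.getVert_mem_support 1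
  have hwP : Q.snd ∉ P.support := fun h => by
    rcases hs.2.2.2 _ h hwQ with h | h
    · exact haw.ne h.symm
    · exact hab (h ▸ haw)
  have hsub : nbrsIn G a (insert u (supp P)) ⊆ insert u (nbrsIn G a H \ {Q.snd}) := by
    rintro z ⟨rfl | hz, haz⟩
    · exact Set.mem_insert _ _
    · exact Set.mem_insert_of_mem _
        ⟨⟨hs.supp_subset_left hz, haz⟩, fun h : z = Q.snd => hwP (h ▸ hz)⟩
  calc _ ≤ (insert u (nbrsIn G a H \ {Q.snd})).ncard :=
        Set.ncard_le_ncard hsub (((hH.finite_nbrsIn a).sdiff).insert u)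
    _ ≤ (nbrsIn G a H \ {Q.snd}).ncard + 1 := Set.ncard_insert_le _ _
    _ = 2 := by
      rw [Set.ncard_sdiff_singleton_of_mem
          (show Q.snd ∈ nbrsIn G a H from ⟨hs.supp_subset_right hwQ, haw⟩),
        hH.2.2.2 a (hs.supp_subset_left P.start_mem_support)]

lemma isHole_insert (hH : IsHole G H) (hs : Splits H P Q) (hne : a ≠ b) (hab : ¬ G.Adj a b)
    {u : V} (hu : u ∉ H) (hN : nbrsIn G u H = {a, b}) : IsHole G (insert u (supp P)) := by
  obtain ⟨⟨-, hua⟩, -, hub⟩ := mem_nbrsIn_of_eq_pair hN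
  set S : G.Walk a b := .cons hua.symm (.cons hub .nil)
  have hlen := two_le_length_of_not_adj P hne hab
  have hsupp : supp (P.append S.reverse) = insert u (supp P) := by
    rw [supp_append, supp_reverse, supp_union_cons_cons]
  have hC : (P.append S.reverse).IsCycle := by
    refine isCycle_append_reverse hs.1 (isPath_cons_cons hne _ _) (fun z hz hzS => ?_)
      (by simp [S]; omega)
    simp only [S, Walk.support_cons, Walk.support_nil, List.mem_cons, List.not_mem_nil,
      or_false] at hzS
    rcases hzS with h | rfl | h
    exacts [Or.inl h, (hu (hs.supp_subset_left hz)).elim, Or.inr h]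
  rw [← hsupp]
  refine isHole_supp_of_isCycle hC (by simp [S]; omega) fun z hz => ?_
  rw [hsupp]
  rcases (show z ∈ insert u (supp P) from hsupp ▸ hz) with rfl | hzP
  · refine (Set.ncard_le_ncard (t := {a, b}) ?_).trans (Set.ncard_pair hne).le
    rintro w ⟨rfl | hw, hzw⟩
    exacts [(hzw.ne rfl).elim, hN ▸ ⟨hs.supp_subset_left hw, hzw⟩]
  by_cases hza : z = a
  · subst hza
    exact hs.ncard_nbrsIn_insert_start_le hH hne hab u
  by_cases hzb : z = b
  · subst hzb
    simpa only [supp_reverse] using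
      hs.reverse.ncard_nbrsIn_insert_start_le hH hne.symm (fun h => hab h.symm) u
  refine hH.ncard_le_two_of_subset_nbrsIn (hs.supp_subset_left hzP) ?_
  rintro w ⟨rfl | hw, hzw⟩
  · have : z ∈ nbrsIn G w H := ⟨hs.supp_subset_left hzP, hzw.symm⟩
    rw [hN] at this
    rcases this with h | h
    exacts [(hza h).elim, (hzb h).elim]
  · exact ⟨hs.supp_subset_left hw, hzw⟩

lemma hasTheta (hH : IsHole G H) (hs : Splits H P Q) (hne : a ≠ b) (hab : ¬ G.Adj a b)
    {u : V} (hu : u ∉ H) (hN : nbrsIn G u H = {a, b}) : HasTheta G := by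
  obtain ⟨⟨-, hua⟩, -, hub⟩ := mem_nbrsIn_of_eq_pair hN
  set S : G.Walk a b := .cons hua.symm (.cons hub .nil)
  have hSdisj : ∀ R : G.Walk a b, supp R ⊆ H → ∀ z, z ∈ R.support → z ∈ S.support →
      z = a ∨ z = b := by
    intro R hR z hz hzS
    simp only [S, Walk.support_cons, Walk.support_nil, List.mem_cons, List.not_mem_nil,
      or_false] at hzS
    rcases hzS with h | rfl | h
    exacts [Or.inl h, (hu (hR hz)).elim, Or.inr h]
  refine ⟨a, b, P, Q, S, hne, hab, hs.1, hs.2.1, isPath_cons_cons hne _ _,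
    two_le_length_of_not_adj P hne hab, two_le_length_of_not_adj Q hne hab, by simp [S],
    hs.2.2.2, hSdisj P hs.supp_subset_left, hSdisj Q hs.supp_subset_right, hs.2.2.1 ▸ hH,
    ?_, ?_⟩
  · rw [supp_union_cons_cons]; exact hs.isHole_insert hH hne hab hu hN
  · rw [supp_union_cons_cons]; exact hs.symm.isHole_insert hH hne hab hu hN

lemma three_le_ncard_nbrsIn (hθ : ¬ HasTheta G) (hH : IsHole G H) (hs : Splits H P Q) {u : V}
    (hu : IsMajorFor G u H) : 3 ≤ (nbrsIn G u H).ncard := by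
  obtain ⟨huH, hne, hmajor⟩ := hu
  by_contra! hlt
  have hpos := (Set.ncard_pos (hH.finite_nbrsIn u)).mpr hne
  rcases (show (nbrsIn G u H).ncard = 1 ∨ (nbrsIn G u H).ncard = 2 by omega) with h₁ | h₂
  · obtain ⟨x, hN⟩ := Set.ncard_eq_one.mp h₁
    have hxH : x ∈ H := (hN ▸ Set.mem_singleton x : x ∈ nbrsIn G u H).1
    obtain ⟨y, hy⟩ := (Set.ncard_pos (hH.finite_nbrsIn x)).mp (by rw [hH.2.2.2 x hxH]; norm_num)
    exact hmajor (hH.isMinorFor_of_subset_pair huH hne hxH hy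
      (hN ▸ Set.singleton_subset_iff.mpr (Set.mem_insert x _)))
  · obtain ⟨x, y, hxy, hN⟩ := Set.ncard_eq_two.mp h₂
    obtain ⟨⟨hxH, -⟩, hyH, -⟩ := mem_nbrsIn_of_eq_pair hN
    by_cases hadj : G.Adj x y
    · exact hmajor (hH.isMinorFor_of_subset_pair huH hne hxH ⟨hyH, hadj⟩ hN.subset)
    · obtain ⟨R₁, R₂, hR⟩ := hs.exists_splits hH.2.1 hxH hyH hxy
      exact hθ (hR.hasTheta hH hxy hadj huH hN)

end Splits

lemma two_le_length_of_nbrsIn_subset {H : Set V} {w a b : V} {P : G.Walk a b}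
    (h3 : 3 ≤ (nbrsIn G w H).ncard) (hP : ∀ x ∈ H, G.Adj w x → x ∈ P.support) :
    2 ≤ P.length := by
  have := (Set.ncard_le_ncard (fun x hx => hP x hx.1 hx.2 : nbrsIn G w H ⊆ supp P)
    P.support.finite_toSet).trans (ncard_supp_le P)
  omega

lemma hasTurtle_of_partition {H : Set V} (hH : IsHole G H) {u v : V} (huv : G.Adj u v)
    (hu : u ∉ H) (hv : v ∉ H) {a₁ b₁ a₂ b₂ : V} {W₁ : G.Walk a₁ b₁} {W₂ : G.Walk a₂ b₂}
    (h₁ : W₁.IsPath) (h₂ : W₂.IsPath) (hdisj : ∀ z, z ∈ W₁.support → z ∉ W₂.support)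
    (ha : G.Adj a₁ a₂) (hb : G.Adj b₁ b₂) (hW : supp W₁ ∪ supp W₂ = H)
    (hu₁ : ∀ x ∈ H, G.Adj u x → x ∈ W₁.support) (hv₂ : ∀ x ∈ H, G.Adj v x → x ∈ W₂.support)
    (hu3 : 3 ≤ (nbrsIn G u H).ncard) (hv3 : 3 ≤ (nbrsIn G v H).ncard) : HasTurtle G := by
  have hW₁ : supp W₁ ⊆ H := hW ▸ Set.subset_union_left
  have hW₂ : supp W₂ ⊆ H := hW ▸ Set.subset_union_right
  have hnb₁ : nbrsIn G u (supp W₁) = nbrsIn G u H :=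
    Set.ext fun z => ⟨fun h => ⟨hW₁ h.1, h.2⟩, fun h => ⟨hu₁ z h.1 h.2, h.2⟩⟩
  have hnb₂ : nbrsIn G v (supp W₂) = nbrsIn G v H :=
    Set.ext fun z => ⟨fun h => ⟨hW₂ h.1, h.2⟩, fun h => ⟨hv₂ z h.1 h.2, h.2⟩⟩
  exact ⟨a₁, b₁, a₂, b₂, u, v, W₁, W₂, h₁, h₂, hdisj, ha, hb, huv,
    fun h => hu (hW₁ h), fun h => hu (hW₂ h), fun h => hv (hW₁ h), fun h => hv (hW₂ h),
    hW ▸ hH, hnb₁ ▸ hu3, fun z hz hadj => hdisj z (hu₁ z (hW₂ hz) hadj) hz,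
    hnb₂ ▸ hv3, fun z hz hadj => hdisj z hz (hv₂ z (hW₁ hz) hadj)⟩

lemma Splits.exists_partition {H : Set V} {a b : V} {P Q : G.Walk a b} (hs : Splits H P Q)
    (hab : a ≠ b) (hP : 2 ≤ P.length) (hQ : 2 ≤ Q.length) (p : V → Prop) :
    ∃ (a₁ b₁ a₂ b₂ : V) (W₁ : G.Walk a₁ b₁) (W₂ : G.Walk a₂ b₂), W₁.IsPath ∧ W₂.IsPath ∧
      (∀ z, z ∈ W₁.support → z ∉ W₂.support) ∧ G.Adj a₁ a₂ ∧ G.Adj b₁ b₂ ∧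
      supp W₁ ∪ supp W₂ = H ∧
      (∀ x ∈ P.support, (x = a ∨ x = b → p x) → x ∈ W₁.support) ∧
      (∀ x ∈ Q.support, (x = a ∨ x = b → ¬ p x) → x ∈ W₂.support) := by
  obtain ⟨a₁, b₁, W₁, hW₁, ha₁, ha₁', hb₁, hb₁', hW₁mem⟩ :=
    exists_path_drop_ends hs.1 hP (¬ p a) (¬ p b)
  obtain ⟨a₂, b₂, W₂, hW₂, ha₂, ha₂', hb₂, hb₂', hW₂mem⟩ :=
    exists_path_drop_ends hs.2.1 hQ (p a) (p b)
  refine ⟨a₁, b₁, a₂, b₂, W₁, W₂, hW₁, hW₂, fun z hz₁ hz₂ => ?_, ?_, ?_, ?_,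
    fun x hx hpx => (hW₁mem x).mpr ⟨hx, fun h hxa => h (hxa ▸ hpx (.inl hxa)),
      fun h hxb => h (hxb ▸ hpx (.inr hxb))⟩,
    fun x hx hpx => (hW₂mem x).mpr ⟨hx, fun h hxa => hpx (.inl hxa) (hxa ▸ h),
      fun h hxb => hpx (.inr hxb) (hxb ▸ h)⟩⟩
  · rw [hW₁mem] at hz₁
    rw [hW₂mem] at hz₂
    rcases hs.2.2.2 z hz₁.1 hz₂.1 with h | h
    · exact (em (p a)).elim (hz₂.2.1 · h) (hz₁.2.1 · h)
    · exact (em (p b)).elim (hz₂.2.2 · h) (hz₁.2.2 · h)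
  · by_cases h : p a
    · exact ha₁' (not_not_intro h) ▸ ha₂ h
    · exact ha₂' h ▸ (ha₁ h).symm
  · by_cases h : p b
    · exact hb₁' (not_not_intro h) ▸ hb₂ h
    · exact hb₂' h ▸ (hb₁ h).symm
  rw [← hs.2.2.1]
  ext z
  simp only [Set.mem_union, mem_supp, hW₁mem, hW₂mem]
  constructor
  · rintro (⟨h, -⟩ | ⟨h, -⟩)
    exacts [Or.inl h, Or.inr h]
  intro h
  by_cases hza : z = a
  · subst hza
    by_cases h : p z
    · exact Or.inl ⟨P.start_mem_support, (absurd h ·), fun _ => hab⟩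
    · exact Or.inr ⟨Q.start_mem_support, (absurd · h), fun _ => hab⟩
  by_cases hzb : z = b
  · subst hzb
    by_cases h : p z
    · exact Or.inl ⟨P.end_mem_support, fun _ => hab.symm, (absurd h ·)⟩
    · exact Or.inr ⟨Q.end_mem_support, fun _ => hab.symm, (absurd · h)⟩
  rcases h with h | h
  exacts [Or.inl ⟨h, fun _ => hza, fun _ => hzb⟩, Or.inr ⟨h, fun _ => hza, fun _ => hzb⟩]

lemma Splits.hasTurtle {H : Set V} {a b : V} {P Q : G.Walk a b} (hH : IsHole G H)
    (hs : Splits H P Q) (hab : a ≠ b) {u v : V} (huv : G.Adj u v) (hu : u ∉ H) (hv : v ∉ H)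
    (huP : ∀ x ∈ H, G.Adj u x → x ∈ P.support) (hvQ : ∀ x ∈ H, G.Adj v x → x ∈ Q.support)
    (hnc : ∀ x ∈ H, G.Adj u x → ¬ G.Adj v x)
    (hu3 : 3 ≤ (nbrsIn G u H).ncard) (hv3 : 3 ≤ (nbrsIn G v H).ncard) : HasTurtle G := by
  obtain ⟨a₁, b₁, a₂, b₂, W₁, W₂, hW₁, hW₂, hdisj, ha, hb, hW, hPW₁, hQW₂⟩ :=
    hs.exists_partition hab (two_le_length_of_nbrsIn_subset hu3 huP)
      (two_le_length_of_nbrsIn_subset hv3 hvQ) (G.Adj u)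
  refine hasTurtle_of_partition hH huv hu hv hW₁ hW₂ hdisj ha hb hW
    (fun x hx hux => hPW₁ x (huP x hx hux) fun _ => hux)
    (fun x hx hvx => hQW₂ x (hvQ x hx hvx) fun _ hux => hnc x hx hux hvx) hu3 hv3

end Holes

/-- In a (theta, pyramid, prism, turtle)-free graph, if `u` and `v` are two
adjacent major vertices for a hole `H`, then either `u` and `v` cross with
respect to `H`, or they have a common neighbor in `H`. -/
theorem adjacent_majors_cross_or_common {V : Type*} (G : SimpleGraph V)
    (hG : TPPTFree G) (H : Set V) (hH : IsHole G H) (u v : V)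
    (hu : IsMajorFor G u H) (hv : IsMajorFor G v H) (huv : G.Adj u v) :
    ¬ Nested G u v H ∨ ∃ w ∈ H, G.Adj u w ∧ G.Adj v w := by
  refine or_iff_not_imp_right.mpr fun hcommon hnested => hG.2.2.2 ?_
  obtain ⟨a, b, -, -, hab, P, Q, hP, hQ, hPQ, hdisj, huP, hvQ⟩ := hnested
  have hs : Splits H P Q := ⟨hP, hQ, hPQ, hdisj⟩
  exact hs.hasTurtle hH hab huv hu.1 hv.1 huP hvQ
    (fun x hx hux hvx => hcommon ⟨x, hx, hux, hvx⟩)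
    (hs.three_le_ncard_nbrsIn hG.1 hH hu) (hs.three_le_ncard_nbrsIn hG.1 hH hv)

end Paper
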